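/- Let (A, R) and (B, L) be Noetherian confluent MRS with nf_L a normal-form function for (B, L), and let φ : (A, R) → (B, L) be an MRS-homomorphism. Then for every list l of elements of A, nf_L (φ (l.prod)) = nf_L ((l.map (fun a => nf_L (φ a))).prod); in particular φ applied to a product of elements is ↔_L*-equivalent to the product of the normal forms of their images (this is the 2-cell φ ∘ ε_A ⇒ ε_B ∘ GIφ of the counit's strong naturality). -/

import Mathlib

/-!
Rewriting in a monoid is compatible with multiplication, so `φ l.prod = ∏ φ a` rewrites
factorwise to `∏ nf (φ a)`; in a confluent system, two elements related by rewriting have the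
same normal form, since a normal form is irreducible and hence is the only thing it rewrites to.
-/

namespace MRS

/-- One-step rewriting relation of an MRS `(M, R)`. -/
def Step {M : Type*} [Monoid M] (R : M → M → Prop) (a b : M) : Prop :=
  ∃ x y s t : M, a = x * s * y ∧ b = x * t * y ∧ R s t

/-- An element is irreducible for a relation if it only rewrites to itself. -/
def IrredRel {α : Type*} (r : α → α → Prop) (a : α) : Prop :=
  ∀ b, r a b → a = b

/-- A relation is Noetherian if there is no infinite chain of non-trivial steps. -/
def NoetherianRel {α : Type*} (r : α → α → Prop) : Prop :=
  ¬ ∃ f : ℕ → α, ∀ n, r (f n) (f (n + 1)) ∧ f n ≠ f (n + 1)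

/-- Confluence of a relation. -/
def ConfluentRel {α : Type*} (r : α → α → Prop) : Prop :=
  ∀ u a b : α, Relation.ReflTransGen r u a → Relation.ReflTransGen r u b →
    ∃ c, Relation.ReflTransGen r a c ∧ Relation.ReflTransGen r b c

/-- `nf` is a normal-form function for the MRS `(M, R)`. -/
def IsNF {M : Type*} [Monoid M] (R : M → M → Prop) (nf : M → M) : Prop :=
  ∀ u, Relation.ReflTransGen (Step R) u (nf u) ∧ IrredRel (Step R) (nf u)

end MRS

namespace MRS

open Relation

theorem IrredRel.eq_of_reflTransGen {α : Type*} {r : α → α → Prop} {a b : α}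
    (ha : IrredRel r a) (hab : ReflTransGen r a b) : a = b := by
  induction hab with
  | refl => rfl
  | tail _ hbc hab => exact ha _ (hab ▸ hbc)

section Monoid

variable {M : Type*} [Monoid M] {R : M → M → Prop}

theorem Step.mul_left (x : M) {a b : M} (h : Step R a b) : Step R (x * a) (x * b) := by
  obtain ⟨p, q, s, t, rfl, rfl, hst⟩ := h
  exact ⟨x * p, q, s, t, by simp only [mul_assoc], by simp only [mul_assoc], hst⟩

theorem Step.mul_right (y : M) {a b : M} (h : Step R a b) : Step R (a * y) (b * y) := by
  obtain ⟨p, q, s, t, rfl, rfl, hst⟩ := h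
  exact ⟨p, q * y, s, t, by simp only [mul_assoc], by simp only [mul_assoc], hst⟩

theorem reflTransGen_step_mul {a b c d : M} (hab : ReflTransGen (Step R) a b)
    (hcd : ReflTransGen (Step R) c d) : ReflTransGen (Step R) (a * c) (b * d) :=
  (hab.lift (· * c) fun _ _ h => h.mul_right c).trans (hcd.lift (b * ·) fun _ _ h => h.mul_left b)

theorem reflTransGen_step_list_prod {ι : Type*} {f g : ι → M} (l : List ι)
    (hfg : ∀ i ∈ l, ReflTransGen (Step R) (f i) (g i)) :
    ReflTransGen (Step R) (l.map f).prod (l.map g).prod := by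
  induction l with
  | nil => exact .refl
  | cons i l ih =>
    simp only [List.map_cons, List.prod_cons]
    exact reflTransGen_step_mul (hfg i List.mem_cons_self)
      (ih fun j hj => hfg j (List.mem_cons_of_mem i hj))

theorem IsNF.eq_of_reflTransGen {nf : M → M} (hnf : IsNF R nf) (hconf : ConfluentRel (Step R))
    {u v : M} (huv : ReflTransGen (Step R) u v) : nf u = nf v := by
  obtain ⟨c, huc, hvc⟩ := hconf u (nf u) (nf v) (hnf u).1 (huv.trans (hnf v).1)
  exact ((hnf u).2.eq_of_reflTransGen huc).trans ((hnf v).2.eq_of_reflTransGen hvc).symm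

end Monoid

end MRS

open MRS

theorem stmt_11_general {A B : Type*} [Monoid A] [Monoid B]
    (L : B → B → Prop)
    (hConfL : ConfluentRel (Step L))
    (nfL : B → B) (hnfL : IsNF L nfL)
    (φ : A →* B) :
    ∀ l : List A, nfL (φ l.prod) = nfL ((l.map (fun a => nfL (φ a))).prod) := by
  intro l
  refine hnfL.eq_of_reflTransGen hConfL ?_
  rw [map_list_prod]
  exact reflTransGen_step_list_prod l fun a _ => (hnfL (φ a)).1

/-- For an MRS-homomorphism `φ` and a list `l` of elements of `A`,
`nf_L (φ (l.prod)) = nf_L ((l.map (fun a => nf_L (φ a))).prod)`. -/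
theorem stmt_11 {A B : Type*} [Monoid A] [Monoid B]
    (R : A → A → Prop) (L : B → B → Prop)
    (hNoethR : NoetherianRel (Step R)) (hConfR : ConfluentRel (Step R))
    (hNoethL : NoetherianRel (Step L)) (hConfL : ConfluentRel (Step L))
    (nfL : B → B) (hnfL : IsNF L nfL)
    (φ : A →* B)
    (hφ : ∀ u v : A, R u v → Relation.ReflTransGen (Step L) (φ u) (φ v)) :
    ∀ l : List A, nfL (φ l.prod) = nfL ((l.map (fun a => nfL (φ a))).prod) :=
  stmt_11_general L hConfL nfL hnfL φ
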